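/- arXiv:1306.4434 — 7 statements merged into one kernel-verified Lean document; each statement's English description precedes it below -/
import Mathlib

section
/- If a graph G satisfies χ(G) ≤ 4 and χ'(G) = Δ(G), then the total chromatic number satisfies χ''(G) ≤ Δ(G) + 2. -/
/-!
Let `c` be a proper 4-colouring and `φ` a proper edge colouring with colours `0, …, k - 1`,
`k = Δ ≥ 2`. Colour the vertices with the four colours `k - 2, …, k + 1` through `c` and keep `φ`
on the edges it colours below `k - 2`. The remaining edges, those coloured `k - 2` or `k - 1`,
span a part of the line graph that `φ` colours properly with two colours, so it has maximum
degree 2. Such an edge must avoid the colours of its two endpoints among `k - 2, …, k + 1`, which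
leaves a list of two colours, and bipartite graphs of maximum degree 2 (paths and even cycles)
are 2-choosable. When `Δ ≤ 1` the graph is a matching, whose vertices are coloured greedily
with the two colours `k` and `k + 1`.
-/

open Finset

lemma Sym2.card_sub_two_le_card_sdiff_toFinset {α : Type*} [Fintype α] [DecidableEq α]
    (z : Sym2 α) : Fintype.card α - 2 ≤ #(univ \ z.toFinset) := by
  have := le_card_sdiff z.toFinset univ
  rw [card_univ, Sym2.card_toFinset] at this
  split_ifs at this <;> omega

namespace SimpleGraph

section ListColoring

variable {ι κ : Type*} {H : SimpleGraph ι}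

def IsListColoring (H : SimpleGraph ι) (S : Finset ι) (L : ι → Finset κ) (f : ι → κ) : Prop :=
  (∀ v ∈ S, f v ∈ L v) ∧ ∀ u ∈ S, ∀ v ∈ S, H.Adj u v → f u ≠ f v

lemma IsListColoring.update [DecidableEq ι] {S : Finset ι} {L L' : ι → Finset κ} {f : ι → κ}
    {v : ι} {c : κ} (hf : H.IsListColoring (S.erase v) L' f)
    (hL' : ∀ w ∈ S.erase v, L' w ⊆ L w) (hc : c ∈ L v)
    (hcf : ∀ w ∈ S.erase v, H.Adj v w → f w ≠ c) :
    H.IsListColoring S L (Function.update f v c) := by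
  refine ⟨fun w hw => ?_, fun u hu w hw huw => ?_⟩
  · rcases eq_or_ne w v with rfl | hwv
    · simpa
    · simpa [hwv] using hL' w (mem_erase.2 ⟨hwv, hw⟩) (hf.1 w (mem_erase.2 ⟨hwv, hw⟩))
  · rcases eq_or_ne u v with rfl | huv
    · have hwu : w ≠ u := (H.ne_of_adj huw).symm
      simpa [hwu] using (hcf w (mem_erase.2 ⟨hwu, hw⟩) huw).symm
    rcases eq_or_ne w v with rfl | hwv
    · simpa [huv] using hcf u (mem_erase.2 ⟨huv, hu⟩) huw.symm
    · simpa [huv, hwv] using hf.2 u (mem_erase.2 ⟨huv, hu⟩) w (mem_erase.2 ⟨hwv, hw⟩) huw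

lemma exists_isListColoring_of_forall_adj_eq [LinearOrder κ] [Nonempty κ] {S : Finset ι}
    {L : ι → Finset κ} (b : ι → Bool) (hb : ∀ u ∈ S, ∀ v ∈ S, H.Adj u v → b u ≠ b v)
    (hL : ∀ v ∈ S, 2 ≤ #(L v)) (hLadj : ∀ u ∈ S, ∀ v ∈ S, H.Adj u v → L u = L v) :
    ∃ f, H.IsListColoring S L f := by
  let f v := if h : (L v).Nonempty then (if b v then (L v).min' h else (L v).max' h)
    else Classical.arbitrary κ
  have hne : ∀ v ∈ S, (L v).Nonempty := fun v hv => card_pos.1 (by linarith [hL v hv])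
  refine ⟨f, fun v hv => ?_, fun u hu v hv huv => ?_⟩
  · simp only [f, dif_pos (hne v hv)]
    split_ifs
    exacts [min'_mem _ _, max'_mem _ _]
  · have hlt : (L u).min' (hne u hu) < (L u).max' (hne u hu) := min'_lt_max'_of_card _ (hL u hu)
    have hbuv := hb u hu v hv huv
    simp only [f, dif_pos (hne u hu), dif_pos (hne v hv), hLadj u hu v hv huv] at hlt ⊢
    cases hbu : b u <;> cases hbv : b v <;> simp_all [hlt.ne, hlt.ne']

variable [DecidableRel H.Adj]

theorem exists_isListColoring_of_degree_lt [DecidableEq ι] [DecidableEq κ] [Nonempty κ]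
    {S : Finset ι} {L : ι → Finset κ} (hL : ∀ v ∈ S, #{w ∈ S | H.Adj v w} < #(L v)) :
    ∃ f, H.IsListColoring S L f := by
  induction S using Finset.strongInduction with
  | H S ih =>
  rcases S.eq_empty_or_nonempty with rfl | ⟨v, hv⟩
  · exact ⟨fun _ => Classical.arbitrary κ, by simp [IsListColoring]⟩
  obtain ⟨f, hf⟩ := ih _ (erase_ssubset hv) fun w hw =>
    (card_le_card (filter_subset_filter _ (erase_subset v S))).trans_lt (hL w (mem_of_mem_erase hw))
  have hcard : #({w ∈ S | H.Adj v w}.image f) < #(L v) := card_image_le.trans_lt (hL v hv)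
  obtain ⟨c, hc, hcf⟩ := exists_mem_notMem_of_card_lt_card hcard
  exact ⟨_, hf.update (fun _ _ => subset_rfl) hc fun w hw hvw hfw =>
    hcf (mem_image.2 ⟨w, mem_filter.2 ⟨mem_of_mem_erase hw, hvw⟩, hfw⟩)⟩

/-- Unlike "every list has two colours", this invariant survives colouring a vertex `v` and
deleting its colour from the lists of the neighbours of `v`. -/
def AlmostTwoLists (H : SimpleGraph ι) [DecidableRel H.Adj] (S : Finset ι)
    (L : ι → Finset κ) : Prop :=
  ∀ v ∈ S, 1 ≤ #(L v) ∧ (#(L v) < 2 → #{w ∈ S | H.Adj v w} ≤ 1 ∧ ∀ w ∈ S, w ≠ v → 2 ≤ #(L w))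

lemma AlmostTwoLists.mono {S T : Finset ι} {L : ι → Finset κ} (h : H.AlmostTwoLists S L)
    (hTS : T ⊆ S) : H.AlmostTwoLists T L := by
  intro v hv
  refine ⟨(h v (hTS hv)).1, fun hlt => ?_⟩
  obtain ⟨hdeg, h2⟩ := (h v (hTS hv)).2 hlt
  exact ⟨(card_le_card (filter_subset_filter _ hTS)).trans hdeg, fun w hw => h2 w (hTS hw)⟩

variable [DecidableEq κ]

def eraseNeighborLists (H : SimpleGraph ι) [DecidableRel H.Adj] (v : ι) (c : κ)
    (L : ι → Finset κ) (w : ι) : Finset κ :=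
  if H.Adj v w then (L w).erase c else L w

lemma exists_isListColoring_of_eraseNeighborLists [DecidableEq ι] {S : Finset ι}
    {L : ι → Finset κ} {v : ι} {c : κ} (hc : c ∈ L v)
    (h : ∃ f, H.IsListColoring (S.erase v) (H.eraseNeighborLists v c L) f) :
    ∃ f, H.IsListColoring S L f := by
  obtain ⟨f, hf⟩ := h
  refine ⟨_, hf.update (fun w _ => ?_) hc fun w hw hvw => ?_⟩
  · unfold eraseNeighborLists
    split_ifs
    exacts [erase_subset _ _, subset_rfl]
  · have hfw := hf.1 w hw
    rw [eraseNeighborLists, if_pos hvw] at hfw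
    exact ne_of_mem_erase hfw

lemma almostTwoLists_eraseNeighborLists [DecidableEq ι] {S : Finset ι} {L : ι → Finset κ}
    {v : ι} {c : κ} (hv : v ∈ S) (hdeg : ∀ w ∈ S, #{x ∈ S | H.Adj w x} ≤ 2)
    (hL : ∀ w ∈ S, w ≠ v → 2 ≤ #(L w)) (hc : #{w ∈ S | H.Adj v w ∧ c ∈ L w} ≤ 1) :
    H.AlmostTwoLists (S.erase v) (H.eraseNeighborLists v c L) := by
  have hshrunk : ∀ w ∈ S.erase v, #(H.eraseNeighborLists v c L w) < 2 →
      w ∈ ({w ∈ S | H.Adj v w ∧ c ∈ L w} : Finset ι) := by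
    intro w hw hlt
    by_contra hnot
    have hsame : H.eraseNeighborLists v c L w = L w := by
      unfold eraseNeighborLists
      split_ifs with hvw
      · exact erase_eq_of_notMem fun hcw => hnot (mem_filter.2 ⟨mem_of_mem_erase hw, hvw, hcw⟩)
      · rfl
    have := hL w (mem_of_mem_erase hw) (ne_of_mem_erase hw)
    rw [hsame] at hlt
    omega
  intro w hw
  have h2 := hL w (mem_of_mem_erase hw) (ne_of_mem_erase hw)
  refine ⟨?_, fun hlt => ⟨?_, fun x hx hxw => ?_⟩⟩
  · unfold eraseNeighborLists
    split_ifs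
    · have := pred_card_le_card_erase (s := L w) (a := c); omega
    · omega
  · have hvw := (mem_filter.1 (hshrunk w hw hlt)).2.1
    have hfilter : {x ∈ S.erase v | H.Adj w x} = {x ∈ S | H.Adj w x}.erase v := filter_erase _ _ _
    rw [hfilter, card_erase_of_mem (mem_filter.2 ⟨hv, hvw.symm⟩)]
    exact Nat.sub_le_iff_le_add.2 (hdeg w (mem_of_mem_erase hw))
  · by_contra hx2
    exact hxw (card_le_one.1 hc x (hshrunk x hx (by omega)) w (hshrunk w hw hlt))

theorem exists_isListColoring_of_almostTwoLists [DecidableEq ι] [LinearOrder κ] [Nonempty κ]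
    {S : Finset ι} {L : ι → Finset κ} (b : ι → Bool)
    (hb : ∀ u ∈ S, ∀ v ∈ S, H.Adj u v → b u ≠ b v) (hdeg : ∀ v ∈ S, #{w ∈ S | H.Adj v w} ≤ 2)
    (hL : H.AlmostTwoLists S L) : ∃ f, H.IsListColoring S L f := by
  induction S using Finset.strongInduction generalizing L with
  | H S ih =>
  have ih_erase : ∀ v ∈ S, ∀ c, H.AlmostTwoLists (S.erase v) (H.eraseNeighborLists v c L) →
      ∃ f, H.IsListColoring (S.erase v) (H.eraseNeighborLists v c L) f := fun v hv _ =>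
    ih _ (erase_ssubset hv) (fun x hx y hy => hb x (mem_of_mem_erase hx) y (mem_of_mem_erase hy))
      fun x hx => (card_le_card (filter_subset_filter _ (erase_subset v S))).trans
        (hdeg x (mem_of_mem_erase hx))
  by_cases hsmall : ∃ v ∈ S, #(L v) < 2
  · obtain ⟨v, hv, hlt⟩ := hsmall
    obtain ⟨hdeg1, hL2⟩ := (hL v hv).2 hlt
    obtain ⟨c, hc⟩ := card_pos.1 (hL v hv).1
    refine exists_isListColoring_of_eraseNeighborLists hc (ih_erase v hv c ?_)
    refine almostTwoLists_eraseNeighborLists hv hdeg hL2 ((card_le_card ?_).trans hdeg1)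
    exact monotone_filter_right S fun _ _ hw => hw.1
  push Not at hsmall
  by_cases hsub : ∃ v ∈ S, ∃ u ∈ S, H.Adj v u ∧ ¬ L v ⊆ L u
  · -- colour `v` by some `c ∉ L u`: then only the other neighbour of `v` can lose a colour
    obtain ⟨v, hv, u, hu, hvu, hvu_sub⟩ := hsub
    obtain ⟨c, hcv, hcu⟩ := not_subset.1 hvu_sub
    refine exists_isListColoring_of_eraseNeighborLists hcv (ih_erase v hv c ?_)
    refine almostTwoLists_eraseNeighborLists hv hdeg (fun w hw _ => hsmall w hw) ?_
    have hu' : u ∈ ({w ∈ S | H.Adj v w} : Finset ι) := mem_filter.2 ⟨hu, hvu⟩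
    calc #{w ∈ S | H.Adj v w ∧ c ∈ L w} ≤ #({w ∈ S | H.Adj v w}.erase u) := by
          refine card_le_card fun w hw => ?_
          obtain ⟨hwS, hvw, hcw⟩ := mem_filter.1 hw
          exact mem_erase.2 ⟨fun h => hcu (h ▸ hcw), mem_filter.2 ⟨hwS, hvw⟩⟩
      _ ≤ 1 := by rw [card_erase_of_mem hu']; have := hdeg v hv; omega
  push Not at hsub
  exact exists_isListColoring_of_forall_adj_eq b hb hsmall fun u hu v hv huv =>
    (hsub u hu v hv huv).antisymm (hsub v hv u hu huv.symm)

theorem exists_isListColoring_of_two_le_card [DecidableEq ι] [LinearOrder κ] [Nonempty κ]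
    {S : Finset ι} {L : ι → Finset κ} (b : ι → Bool)
    (hb : ∀ u ∈ S, ∀ v ∈ S, H.Adj u v → b u ≠ b v) (hdeg : ∀ v ∈ S, #{w ∈ S | H.Adj v w} ≤ 2)
    (hL : ∀ v ∈ S, 2 ≤ #(L v)) : ∃ f, H.IsListColoring S L f :=
  exists_isListColoring_of_almostTwoLists b hb hdeg fun v hv =>
    ⟨one_le_two.trans (hL v hv), fun hlt => absurd (hL v hv) hlt.not_ge⟩

end ListColoring

variable {V : Type*} {G : SimpleGraph V}

def IsTotalColoring {α : Type*} (cv : G.Coloring α) (ce : G.lineGraph.Coloring α) : Prop :=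
  ∀ (e : G.edgeSet) (v : V), v ∈ (e : Sym2 V) → ce e ≠ cv v

/-- Two neighbours of `e` through the same endpoint are adjacent, so a proper 2-colouring allows
at most one of them. -/
lemma card_filter_lineGraph_adj_le_two [DecidableRel G.lineGraph.Adj] {S : Finset G.edgeSet}
    {b : G.edgeSet → Bool} (hb : ∀ e ∈ S, ∀ f ∈ S, G.lineGraph.Adj e f → b e ≠ b f)
    {e : G.edgeSet} (he : e ∈ S) : #{f ∈ S | G.lineGraph.Adj e f} ≤ 2 := by
  classical
  calc #{f ∈ S | G.lineGraph.Adj e f}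
      ≤ #(e : Sym2 V).toFinset := card_le_card_of_forall_subsingleton
        (fun (f : G.edgeSet) (v : V) => v ∈ (f : Sym2 V))
        (fun f hf => ?_) fun v _ f₁ hf₁ f₂ hf₂ => ?_
    _ ≤ 2 := by rw [Sym2.card_toFinset]; split_ifs <;> omega
  · obtain ⟨v, hve, hvf⟩ := (lineGraph_adj_iff_exists.1 (mem_filter.1 hf).2).2
    exact ⟨v, Sym2.mem_toFinset.2 hve, hvf⟩
  · simp only [mem_filter] at hf₁ hf₂
    by_contra hne
    have h₁₂ := hb f₁ hf₁.1.1 f₂ hf₂.1.1 (lineGraph_adj_iff_exists.2 ⟨hne, v, hf₁.2, hf₂.2⟩)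
    have h₁ := hb e he f₁ hf₁.1.1 hf₁.1.2
    have h₂ := hb e he f₂ hf₂.1.1 hf₂.1.2
    revert h₁₂ h₁ h₂
    cases b e <;> cases b f₁ <;> cases b f₂ <;> decide

theorem exists_totalColoring_of_maxDegree_le_one [Fintype V] [DecidableRel G.Adj] {k : ℕ}
    (hG : G.maxDegree ≤ 1) (φ : G.lineGraph.Coloring (Fin k)) :
    ∃ (cv : G.Coloring (Fin (k + 2))) (ce : G.lineGraph.Coloring (Fin (k + 2))),
      IsTotalColoring cv ce := by
  classical
  obtain ⟨f, hfL, hf⟩ := G.exists_isListColoring_of_degree_lt (S := univ)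
    (L := fun _ => univ.map (Fin.natAddEmb k : Fin 2 ↪ Fin (k + 2))) fun v _ => by
      rw [← neighborFinset_eq_filter, card_neighborFinset_eq_degree, card_map, card_univ,
        Fintype.card_fin]
      exact (G.degree_le_maxDegree v).trans_lt (hG.trans_lt one_lt_two)
  refine ⟨Coloring.mk f fun huv => hf _ (mem_univ _) _ (mem_univ _) huv,
    Coloring.mk (Fin.castAdd 2 ∘ φ) fun hef => by simpa using φ.valid hef, fun e v _ h => ?_⟩
  obtain ⟨i, -, hi⟩ := mem_map.1 (hfL v (mem_univ v))
  change Fin.castAdd 2 (φ e) = f v at h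
  have := congrArg Fin.val (h.trans hi.symm)
  simp at this
  omega

theorem exists_totalColoring_of_coloring_fin_four [Fintype V] {k : ℕ} (hk : 2 ≤ k)
    (c : G.Coloring (Fin 4)) (φ : G.lineGraph.Coloring (Fin k)) :
    ∃ (cv : G.Coloring (Fin (k + 2))) (ce : G.lineGraph.Coloring (Fin (k + 2))),
      IsTotalColoring cv ce := by
  classical
  let S : Finset G.edgeSet := {e | k - 2 ≤ φ e}
  let b : G.edgeSet → Bool := fun e => (φ e : ℕ) = k - 2
  have hb : ∀ e ∈ S, ∀ f ∈ S, G.lineGraph.Adj e f → b e ≠ b f := by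
    intro e he f hf hef
    have := Fin.val_ne_of_ne (φ.valid hef)
    simp only [S, mem_filter, mem_univ, true_and] at he hf
    simp only [b, ne_eq, decide_eq_decide]
    omega
  obtain ⟨ψ, hψL, hψ⟩ := G.lineGraph.exists_isListColoring_of_two_le_card
    (L := fun e => univ \ ((e : Sym2 V).map c).toFinset) b hb
    (fun e he => card_filter_lineGraph_adj_le_two hb he)
    fun e _ => by simpa using Sym2.card_sub_two_le_card_sdiff_toFinset ((e : Sym2 V).map c)
  let emb : Fin 4 → Fin (k + 2) := fun i => ⟨k - 2 + i, by omega⟩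
  have hemb : ∀ i j, emb i = emb j → i = j := fun i j h => by
    simpa [emb, Fin.ext_iff] using h
  have hlt_emb : ∀ e ∉ S, ∀ i, Fin.castAdd 2 (φ e) ≠ emb i := fun e he i h => by
    simp only [S, mem_filter, mem_univ, true_and, not_le] at he
    simp only [emb, Fin.ext_iff, Fin.val_castAdd] at h
    omega
  refine ⟨Coloring.mk (emb ∘ c) fun huv h => c.valid huv (hemb _ _ h),
    Coloring.mk (fun e => if e ∈ S then emb (ψ e) else Fin.castAdd 2 (φ e)) fun {e f} hef h => ?_,
    fun e v hv h => ?_⟩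
  · by_cases he : e ∈ S <;> by_cases hf : f ∈ S <;> simp only [he, hf, if_true, if_false] at h
    · exact hψ _ he _ hf hef (hemb _ _ h)
    · exact hlt_emb f hf _ h.symm
    · exact hlt_emb e he _ h
    · exact φ.valid hef (Fin.castAdd_injective _ _ h)
  · change (if e ∈ S then emb (ψ e) else Fin.castAdd 2 (φ e)) = emb (c v) at h
    split_ifs at h with he
    · have := hψL e he
      simp only [mem_sdiff, mem_univ, true_and, Sym2.mem_toFinset, Sym2.mem_map, not_exists,
        not_and] at this
      exact this v hv (hemb _ _ h).symm
    · exact hlt_emb e he _ h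

end SimpleGraph

open SimpleGraph

theorem stmt_4_general {V : Type*} [Fintype V]
    (G : SimpleGraph V) [DecidableRel G.Adj]
    (hχ : ∃ c : V → Fin 4, ∀ ⦃u v⦄, G.Adj u v → c u ≠ c v)
    (hχ' : ∃ c : G.edgeSet → Fin G.maxDegree, ∀ e f : G.edgeSet, e ≠ f →
      (∃ v : V, v ∈ e.val ∧ v ∈ f.val) → c e ≠ c f) :
    ∃ (cv : V → Fin (G.maxDegree + 2)) (ce : G.edgeSet → Fin (G.maxDegree + 2)),
      (∀ ⦃u v⦄, G.Adj u v → cv u ≠ cv v) ∧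
      (∀ e f : G.edgeSet, e ≠ f → (∃ v : V, v ∈ e.val ∧ v ∈ f.val) → ce e ≠ ce f) ∧
      (∀ (e : G.edgeSet) (v : V), v ∈ e.val → ce e ≠ cv v) := by
  obtain ⟨c, hc⟩ := hχ
  obtain ⟨φ, hφ⟩ := hχ'
  let φ' : G.lineGraph.Coloring (Fin G.maxDegree) :=
    Coloring.mk φ fun hef => hφ _ _ hef.1 (lineGraph_adj_iff_exists.1 hef).2
  obtain ⟨cv, ce, hinc⟩ : ∃ (cv : G.Coloring (Fin (G.maxDegree + 2)))
      (ce : G.lineGraph.Coloring (Fin (G.maxDegree + 2))), IsTotalColoring cv ce := by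
    rcases le_or_gt G.maxDegree 1 with hΔ | hΔ
    · exact exists_totalColoring_of_maxDegree_le_one hΔ φ'
    · exact exists_totalColoring_of_coloring_fin_four hΔ (Coloring.mk c fun huv => hc huv) φ'
  exact ⟨cv, ce, fun _ _ => cv.valid,
    fun _ _ hne hv => ce.valid (lineGraph_adj_iff_exists.2 ⟨hne, hv⟩), hinc⟩

/-- If `χ(G) ≤ 4` (there is a proper 4-coloring) and `χ'(G) = Δ(G)`
(there is a proper edge-coloring with `Δ(G)` colors), then the total chromatic number
satisfies `χ''(G) ≤ Δ(G) + 2`: there is a total coloring with `Δ(G) + 2` colors. -/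
theorem stmt_4 {V : Type*} [Fintype V] [DecidableEq V]
    (G : SimpleGraph V) [DecidableRel G.Adj]
    (hχ : ∃ c : V → Fin 4, ∀ ⦃u v⦄, G.Adj u v → c u ≠ c v)
    (hχ' : ∃ c : G.edgeSet → Fin G.maxDegree, ∀ e f : G.edgeSet, e ≠ f →
      (∃ v : V, v ∈ e.val ∧ v ∈ f.val) → c e ≠ c f) :
    ∃ (cv : V → Fin (G.maxDegree + 2)) (ce : G.edgeSet → Fin (G.maxDegree + 2)),
      (∀ ⦃u v⦄, G.Adj u v → cv u ≠ cv v) ∧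
      (∀ e f : G.edgeSet, e ≠ f → (∃ v : V, v ∈ e.val ∧ v ∈ f.val) → ce e ≠ ce f) ∧
      (∀ (e : G.edgeSet) (v : V), v ∈ e.val → ce e ≠ cv v) :=
  stmt_4_general G hχ hχ'
end

section
/- If G is a graph with minimum degree 2 and mad(G) < 3, then G has a vertex of degree 2 with a neighbor of degree at most 5. -/
/-!
Suppose every vertex of degree 2 has only neighbours of degree at least 6. Let each vertex of
degree at least 6 send charge `1/2` along each of its edges to vertices of degree 2. A degree-2
vertex then ends with charge `3`, a vertex of degree 3 to 5 keeps its degree, and a vertex of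
degree `d ≥ 6` keeps at least `d/2 ≥ 3`. Hence the average degree is at least 3, contradicting
`mad(G) < 3` for `H = G`.
-/

open Finset

namespace SimpleGraph

variable {V : Type*} [Fintype V] (G : SimpleGraph V) [DecidableRel G.Adj]

theorem sum_degree_le_sum_degree_of_adj_mem {s t : Finset V}
    (hst : ∀ a ∈ s, ∀ b, G.Adj a b → b ∈ t) :
    ∑ a ∈ s, G.degree a ≤ ∑ b ∈ t, G.degree b := by
  calc ∑ a ∈ s, G.degree a = ∑ a ∈ s, #(t.bipartiteAbove G.Adj a) := by
        refine sum_congr rfl fun a ha => ?_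
        rw [← card_neighborFinset_eq_degree]
        congr 1
        ext b
        simp only [mem_neighborFinset, bipartiteAbove, mem_filter, iff_and_self]
        exact hst a ha b
    _ = ∑ b ∈ t, #(s.bipartiteBelow G.Adj b) :=
        sum_card_bipartiteAbove_eq_sum_card_bipartiteBelow _
    _ ≤ ∑ b ∈ t, G.degree b := by
        refine sum_le_sum fun b _ => ?_
        rw [← card_neighborFinset_eq_degree]
        exact card_le_card fun a ha =>
          (G.mem_neighborFinset b a).mpr (G.adj_symm (mem_filter.mp ha).2)

theorem three_mul_card_le_sum_degrees (hmin : ∀ v, 2 ≤ G.degree v)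
    (hnbr : ∀ v w, G.Adj v w → G.degree v = 2 → 6 ≤ G.degree w) :
    3 * Fintype.card V ≤ ∑ v, G.degree v := by
  have htransfer : ∑ v with G.degree v = 2, G.degree v ≤ ∑ v with 6 ≤ G.degree v, G.degree v :=
    G.sum_degree_le_sum_degree_of_adj_mem fun a ha b hab => by
      simpa using hnbr a b hab (by simpa using ha)
  have hpointwise : ∀ v, 6 + (if 6 ≤ G.degree v then G.degree v else 0) ≤
      2 * G.degree v + (if G.degree v = 2 then G.degree v else 0) := by
    intro v
    have := hmin v
    split_ifs <;> omega
  have hsum := sum_le_sum fun v (_ : v ∈ univ) => hpointwise v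
  simp only [sum_add_distrib, ← sum_filter, sum_const, card_univ, smul_eq_mul,
    ← mul_sum] at hsum
  omega

theorem sum_degrees_lt_of_edgeDensity_lt [Nonempty V]
    (h : (2 * (⊤ : G.Subgraph).edgeSet.ncard : ℚ) / (⊤ : G.Subgraph).verts.ncard < 3) :
    ∑ v, G.degree v < 3 * Fintype.card V := by
  rw [Subgraph.verts_top, Subgraph.edgeSet_top, Set.ncard_univ, Nat.card_eq_fintype_card,
    div_lt_iff₀ (by exact_mod_cast Fintype.card_pos), ← coe_edgeFinset, Set.ncard_coe_finset] at h
  rw [sum_degrees_eq_twice_card_edges]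
  exact_mod_cast h

end SimpleGraph

theorem stmt_11_general {V : Type*} [Fintype V] [Nonempty V]
    (G : SimpleGraph V) [DecidableRel G.Adj] (hδ : G.minDegree = 2)
    (hmad : ∀ H : G.Subgraph, H.verts.Nonempty →
      (2 * H.edgeSet.ncard : ℚ) / (H.verts.ncard : ℚ) < 3) :
    ∃ v w : V, G.Adj v w ∧ G.degree v = 2 ∧ G.degree w ≤ 5 := by
  by_contra! hnbr
  have hmin : ∀ v, 2 ≤ G.degree v := fun v => hδ ▸ G.minDegree_le_degree v
  have hlt := G.sum_degrees_lt_of_edgeDensity_lt (hmad ⊤ Set.univ_nonempty)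
  have hle := G.three_mul_card_le_sum_degrees hmin hnbr
  omega

/-- If `G` has minimum degree exactly 2 and `mad(G) < 3` (every nonempty
subgraph `H` satisfies `2|E(H)|/|V(H)| < 3`), then `G` has a vertex of degree 2 with a
neighbor of degree at most 5. -/
theorem stmt_11 {V : Type*} [Fintype V] [DecidableEq V] [Nonempty V]
    (G : SimpleGraph V) [DecidableRel G.Adj] (hδ : G.minDegree = 2)
    (hmad : ∀ H : G.Subgraph, H.verts.Nonempty →
      (2 * H.edgeSet.ncard : ℚ) / (H.verts.ncard : ℚ) < 3) :
    ∃ v w : V, G.Adj v w ∧ G.degree v = 2 ∧ G.degree w ≤ 5 :=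
  stmt_11_general G hδ hmad
end

section
/- If G is a graph with Δ(G) = 3 and average degree strictly less than 36/13, then G contains a vertex of degree at most 1, or two adjacent 2-vertices, or a 3-vertex with at least two 2-neighbors, or two adjacent 3-vertices each having a 2-neighbor. -/
/-!
Suppose none of the four configurations occurs, so every degree is 2 or 3. Call a 3-vertex
*of type A* if it has exactly one 2-neighbor and *of type B* if it has none. Each neighbor of a
2-vertex is of type A and has no other 2-neighbor, so `|A| = 2 n₂`. The two other neighbors of an
A-vertex are 3-vertices adjacent to a 3-vertex with a 2-neighbor, hence of type B, so
`2 |A| ≤ 3 |B|`. Thus `n₃ ≥ |A| + |B| ≥ 10 n₂ / 3`, and the average degree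
`3 - n₂ / (n₂ + n₃)` is at least `3 - 3 / 13 = 36 / 13`.
-/

open Finset

namespace SimpleGraph

variable {V : Type*} [Fintype V] (G : SimpleGraph V) [DecidableRel G.Adj]

def twoNeighborFinset (v : V) : Finset V := {w ∈ G.neighborFinset v | G.degree w = 2}

def verticesOfDegree (d : ℕ) : Finset V := {v | G.degree v = d}

def threeVerticesWithTwoNeighbors (k : ℕ) : Finset V :=
  {v | G.degree v = 3 ∧ #(G.twoNeighborFinset v) = k}

structure AvoidsReducibleConfigurations : Prop where
  two_le_degree : ∀ v, 2 ≤ G.degree v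
  degree_le_three : ∀ v, G.degree v ≤ 3
  not_adj_of_degree_two : ∀ v w, G.degree v = 2 → G.degree w = 2 → ¬ G.Adj v w
  card_twoNeighborFinset_le_one : ∀ v, G.degree v = 3 → #(G.twoNeighborFinset v) ≤ 1
  twoNeighborFinset_eq_empty : ∀ v w, G.Adj v w → G.degree v = 3 → G.degree w = 3 →
    (G.twoNeighborFinset v).Nonempty → G.twoNeighborFinset w = ∅

variable {G}

@[simp]
theorem mem_twoNeighborFinset {v w : V} :
    w ∈ G.twoNeighborFinset v ↔ G.Adj v w ∧ G.degree w = 2 := by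
  simp [twoNeighborFinset]

theorem twoNeighborFinset_subset (v : V) : G.twoNeighborFinset v ⊆ G.neighborFinset v :=
  filter_subset _ _

@[simp]
theorem mem_verticesOfDegree {d : ℕ} {v : V} : v ∈ G.verticesOfDegree d ↔ G.degree v = d := by
  simp [verticesOfDegree]

@[simp]
theorem mem_threeVerticesWithTwoNeighbors {k : ℕ} {v : V} :
    v ∈ G.threeVerticesWithTwoNeighbors k ↔ G.degree v = 3 ∧ #(G.twoNeighborFinset v) = k := by
  simp [threeVerticesWithTwoNeighbors]

theorem card_threeVerticesWithTwoNeighbors_one_add_zero_le :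
    #(G.threeVerticesWithTwoNeighbors 1) + #(G.threeVerticesWithTwoNeighbors 0)
      ≤ #(G.verticesOfDegree 3) := by
  classical
  have hdisj :
      Disjoint (G.threeVerticesWithTwoNeighbors 1) (G.threeVerticesWithTwoNeighbors 0) :=
    Finset.disjoint_left.mpr fun v h1 h0 => by
      rw [mem_threeVerticesWithTwoNeighbors] at h1 h0
      omega
  rw [← card_union_of_disjoint hdisj]
  exact card_le_card fun v hv => by
    simp only [mem_union, mem_threeVerticesWithTwoNeighbors] at hv
    exact mem_verticesOfDegree.mpr (hv.elim (·.1) (·.1))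

theorem sum_degrees_eq_of_degree_eq_two_or_three (h : ∀ v, G.degree v = 2 ∨ G.degree v = 3) :
    ∑ v, G.degree v = 2 * #(G.verticesOfDegree 2) + 3 * #(G.verticesOfDegree 3) := by
  have hsplit (v : V) : G.degree v
      = 2 * (if G.degree v = 2 then 1 else 0) + 3 * (if G.degree v = 3 then 1 else 0) := by
    rcases h v with hv | hv <;> simp [hv]
  rw [sum_congr rfl fun v _ => hsplit v, sum_add_distrib, ← mul_sum, ← mul_sum, sum_boole,
    sum_boole, Nat.cast_id, Nat.cast_id]
  rfl

theorem card_eq_of_degree_eq_two_or_three (h : ∀ v, G.degree v = 2 ∨ G.degree v = 3) :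
    Fintype.card V = #(G.verticesOfDegree 2) + #(G.verticesOfDegree 3) := by
  have hsplit (v : V) :
      1 = (if G.degree v = 2 then 1 else 0) + (if G.degree v = 3 then 1 else 0) := by
    rcases h v with hv | hv <;> simp [hv]
  rw [← card_univ, card_eq_sum_ones, sum_congr rfl fun v _ => hsplit v, sum_add_distrib,
    sum_boole, sum_boole, Nat.cast_id, Nat.cast_id]
  rfl

namespace AvoidsReducibleConfigurations

theorem degree_eq_two_or_three (hG : G.AvoidsReducibleConfigurations) (v : V) :
    G.degree v = 2 ∨ G.degree v = 3 := by
  have := hG.two_le_degree v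
  have := hG.degree_le_three v
  omega

theorem mem_threeVerticesWithTwoNeighbors_one_of_adj (hG : G.AvoidsReducibleConfigurations)
    {v w : V} (hv : G.degree v = 2) (hvw : G.Adj v w) : w ∈ G.threeVerticesWithTwoNeighbors 1 := by
  have hw : G.degree w = 3 :=
    (hG.degree_eq_two_or_three w).resolve_left (hG.not_adj_of_degree_two v w hv · hvw)
  have hpos : 0 < #(G.twoNeighborFinset w) :=
    card_pos.mpr ⟨v, mem_twoNeighborFinset.mpr ⟨hvw.symm, hv⟩⟩
  have := hG.card_twoNeighborFinset_le_one w hw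
  exact mem_threeVerticesWithTwoNeighbors.mpr ⟨hw, by omega⟩

theorem card_threeVerticesWithTwoNeighbors_one (hG : G.AvoidsReducibleConfigurations) :
    #(G.threeVerticesWithTwoNeighbors 1) = 2 * #(G.verticesOfDegree 2) := by
  have := card_mul_eq_card_mul G.Adj (m := 2) (n := 1)
    (s := G.verticesOfDegree 2) (t := G.threeVerticesWithTwoNeighbors 1)
    (fun v hv => by
      have hv : G.degree v = 2 := mem_verticesOfDegree.mp hv
      have : (G.threeVerticesWithTwoNeighbors 1).bipartiteAbove G.Adj v = G.neighborFinset v := by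
        ext w
        simpa [bipartiteAbove] using hG.mem_threeVerticesWithTwoNeighbors_one_of_adj hv
      rw [this, card_neighborFinset_eq_degree, hv])
    (fun w hw => by
      have : (G.verticesOfDegree 2).bipartiteBelow G.Adj w = G.twoNeighborFinset w := by
        ext v
        simp [bipartiteBelow, G.adj_comm v w, and_comm]
      rw [this, (mem_threeVerticesWithTwoNeighbors.mp hw).2])
  omega

theorem card_bipartiteAbove_threeVerticesWithTwoNeighbors_zero
    (hG : G.AvoidsReducibleConfigurations) {w : V} (hw : w ∈ G.threeVerticesWithTwoNeighbors 1) :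
    #((G.threeVerticesWithTwoNeighbors 0).bipartiteAbove G.Adj w) = 2 := by
  classical
  obtain ⟨hw3, hw1⟩ := mem_threeVerticesWithTwoNeighbors.mp hw
  have hne : (G.twoNeighborFinset w).Nonempty := card_pos.mp (by omega)
  have : (G.threeVerticesWithTwoNeighbors 0).bipartiteAbove G.Adj w
      = G.neighborFinset w \ G.twoNeighborFinset w := by
    ext u
    simp only [bipartiteAbove, mem_filter, mem_threeVerticesWithTwoNeighbors, mem_sdiff,
      mem_neighborFinset, mem_twoNeighborFinset, not_and, card_eq_zero]
    constructor
    · rintro ⟨⟨hu3, -⟩, hwu⟩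
      exact ⟨hwu, fun _ => by omega⟩
    · rintro ⟨hwu, hu2⟩
      have hu3 := (hG.degree_eq_two_or_three u).resolve_left (hu2 hwu)
      exact ⟨⟨hu3, hG.twoNeighborFinset_eq_empty w u hwu hw3 hu3 hne⟩, hwu⟩
  rw [this, card_sdiff_of_subset (G.twoNeighborFinset_subset w), hw1,
    card_neighborFinset_eq_degree, hw3]

theorem two_mul_card_one_le_three_mul_card_zero (hG : G.AvoidsReducibleConfigurations) :
    2 * #(G.threeVerticesWithTwoNeighbors 1) ≤ 3 * #(G.threeVerticesWithTwoNeighbors 0) := by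
  have := card_mul_le_card_mul G.Adj (m := 2) (n := 3)
    (fun w hw => (hG.card_bipartiteAbove_threeVerticesWithTwoNeighbors_zero hw).ge)
    (fun b _ => calc
      #((G.threeVerticesWithTwoNeighbors 1).bipartiteBelow G.Adj b)
        ≤ #(G.neighborFinset b) := card_le_card fun w hw => by
          simpa [bipartiteBelow, G.adj_comm] using (mem_filter.mp hw).2
      _ ≤ 3 := (G.card_neighborFinset_eq_degree b).trans_le (hG.degree_le_three b))
  omega

theorem ten_mul_card_two_le_three_mul_card_three (hG : G.AvoidsReducibleConfigurations) :
    10 * #(G.verticesOfDegree 2) ≤ 3 * #(G.verticesOfDegree 3) := by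
  have := hG.card_threeVerticesWithTwoNeighbors_one
  have := hG.two_mul_card_one_le_three_mul_card_zero
  have := G.card_threeVerticesWithTwoNeighbors_one_add_zero_le
  omega

theorem thirty_six_mul_card_le (hG : G.AvoidsReducibleConfigurations) :
    36 * Fintype.card V ≤ 13 * (2 * #G.edgeFinset) := by
  rw [← sum_degrees_eq_twice_card_edges,
    sum_degrees_eq_of_degree_eq_two_or_three hG.degree_eq_two_or_three,
    card_eq_of_degree_eq_two_or_three hG.degree_eq_two_or_three]
  have := hG.ten_mul_card_two_le_three_mul_card_three
  omega

end AvoidsReducibleConfigurations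

end SimpleGraph

theorem stmt_12_general {V : Type*} [Fintype V] [Nonempty V]
    (G : SimpleGraph V) [DecidableRel G.Adj] (hΔ : G.maxDegree = 3)
    (havg : (2 * G.edgeFinset.card : ℚ) / (Fintype.card V : ℚ) < 36 / 13) :
    (∃ v : V, G.degree v ≤ 1) ∨
    (∃ v w : V, G.Adj v w ∧ G.degree v = 2 ∧ G.degree w = 2) ∨
    (∃ v : V, G.degree v = 3 ∧
      2 ≤ ((G.neighborFinset v).filter fun w => G.degree w = 2).card) ∨
    (∃ v w : V, G.Adj v w ∧ G.degree v = 3 ∧ G.degree w = 3 ∧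
      (∃ a : V, G.Adj v a ∧ G.degree a = 2) ∧ (∃ b : V, G.Adj w b ∧ G.degree b = 2)) := by
  by_contra! h
  obtain ⟨hdeg, hadj, htwo, hthree⟩ := h
  have hG : G.AvoidsReducibleConfigurations :=
    { two_le_degree := hdeg
      degree_le_three := fun v => hΔ ▸ G.degree_le_maxDegree v
      not_adj_of_degree_two := fun v w hv hw hvw => hadj v w hvw hv hw
      card_twoNeighborFinset_le_one := fun v hv => Nat.le_of_lt_succ (htwo v hv)
      twoNeighborFinset_eq_empty := fun v w hvw hv hw ⟨a, ha⟩ =>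
        eq_empty_of_forall_notMem fun b hb => by
          rw [SimpleGraph.mem_twoNeighborFinset] at ha hb
          exact hthree v w hvw hv hw ⟨a, ha⟩ b hb.1 hb.2 }
  have hpos : (0 : ℚ) < Fintype.card V := by exact_mod_cast Fintype.card_pos
  rw [div_lt_div_iff₀ hpos (by norm_num)] at havg
  have : ((36 * Fintype.card V : ℕ) : ℚ) ≤ (13 * (2 * G.edgeFinset.card) : ℕ) := by
    exact_mod_cast hG.thirty_six_mul_card_le
  push_cast at this
  linarith

/-- If `G` has maximum degree 3 and average degree less than `36/13`, then
`G` contains a vertex of degree at most 1, or two adjacent 2-vertices, or a 3-vertex with at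
least two 2-neighbors, or two adjacent 3-vertices each having a 2-neighbor. -/
theorem stmt_12 {V : Type*} [Fintype V] [DecidableEq V] [Nonempty V]
    (G : SimpleGraph V) [DecidableRel G.Adj] (hΔ : G.maxDegree = 3)
    (havg : (2 * G.edgeFinset.card : ℚ) / (Fintype.card V : ℚ) < 36 / 13) :
    (∃ v : V, G.degree v ≤ 1) ∨
    (∃ v w : V, G.Adj v w ∧ G.degree v = 2 ∧ G.degree w = 2) ∨
    (∃ v : V, G.degree v = 3 ∧
      2 ≤ ((G.neighborFinset v).filter fun w => G.degree w = 2).card) ∨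
    (∃ v w : V, G.Adj v w ∧ G.degree v = 3 ∧ G.degree w = 3 ∧
      (∃ a : V, G.Adj v a ∧ G.degree a = 2) ∧ (∃ b : V, G.Adj w b ∧ G.degree b = 2)) :=
  stmt_12_general G hΔ havg
end

section
/- Every forest admits a star 3-coloring: a proper coloring with 3 colors in which no path on 4 vertices is 2-colored. -/
/-!
Root every component of the forest and color each vertex by its depth modulo 3. Depths of
adjacent vertices differ by one, and every vertex has at most one neighbour of smaller depth
(its parent). Hence a path can only turn from descending to ascending, never back, so among the
three steps of a path on four vertices two consecutive ones go in the same direction: they span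
three consecutive depths, which receive three different colors.
-/

/-- A star coloring with `k` colors: a proper coloring in which no path on 4 (distinct)
vertices receives only 2 colors. -/
def IsStarColoring {V : Type*} (G : SimpleGraph V) {k : ℕ} (c : V → Fin k) : Prop :=
  (∀ ⦃u v⦄, G.Adj u v → c u ≠ c v) ∧
  ∀ p₁ p₂ p₃ p₄ : V, G.Adj p₁ p₂ → G.Adj p₂ p₃ → G.Adj p₃ p₄ →
    p₁ ≠ p₂ → p₁ ≠ p₃ → p₁ ≠ p₄ → p₂ ≠ p₃ → p₂ ≠ p₄ → p₃ ≠ p₄ →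
    ¬ (({c p₁, c p₂, c p₃, c p₄} : Finset (Fin k)).card ≤ 2)

namespace SimpleGraph

variable {V : Type*} {G : SimpleGraph V}

/-- Shortest paths to `u` and to `w`, extended by one edge, are two geodesics to `v`; in a forest
they coincide. -/
lemma IsAcyclic.eq_of_adj_of_dist_add_one_eq (hG : G.IsAcyclic) {r u v w : V}
    (hu : G.Adj u v) (hw : G.Adj w v) (hur : G.dist r u + 1 = G.dist r v)
    (hwr : G.dist r w + 1 = G.dist r v) : u = w := by
  have hrv : G.Reachable r v := Reachable.of_dist_ne_zero (by omega)
  obtain ⟨p, -, hp⟩ := (hrv.trans hu.symm.reachable).exists_path_of_dist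
  obtain ⟨q, -, hq⟩ := (hrv.trans hw.symm.reachable).exists_path_of_dist
  have hpu : (p.concat hu).IsPath := Walk.isPath_of_length_eq_dist _ (by simp [hp, hur])
  have hqw : (q.concat hw).IsPath := Walk.isPath_of_length_eq_dist _ (by simp [hq, hwr])
  have := congrArg Subtype.val ((hG.subsingleton_path r v).elim ⟨_, hpu⟩ ⟨_, hqw⟩)
  exact (Walk.concat_inj this).1

noncomputable def depth (G : SimpleGraph V) (v : V) : ℕ :=
  G.dist (G.connectedComponentMk v).out v

lemma reachable_out_connectedComponentMk (v : V) :
    G.Reachable (G.connectedComponentMk v).out v :=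
  ConnectedComponent.exact (G.connectedComponentMk v).out_eq

lemma IsAcyclic.depth_eq_add_one_or_of_adj (hG : G.IsAcyclic) {u v : V} (h : G.Adj u v) :
    G.depth v = G.depth u + 1 ∨ G.depth u = G.depth v + 1 := by
  unfold depth
  rw [← ConnectedComponent.sound h.reachable]
  exact (hG.dist_eq_dist_add_one_of_adj_of_reachable _ h
    (reachable_out_connectedComponentMk u)).symm

lemma IsAcyclic.eq_of_adj_of_depth_add_one_eq (hG : G.IsAcyclic) {u v w : V}
    (hu : G.Adj u v) (hw : G.Adj w v) (hur : G.depth u + 1 = G.depth v)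
    (hwr : G.depth w + 1 = G.depth v) : u = w := by
  unfold depth at hur hwr
  rw [ConnectedComponent.sound hu.reachable] at hur
  rw [ConnectedComponent.sound hw.reachable] at hwr
  exact hG.eq_of_adj_of_dist_add_one_eq hu hw hur hwr

end SimpleGraph

open Fin.NatCast

lemma Fin.two_lt_card_of_consecutive {s : Finset (Fin 3)} {a b c : ℕ} (hb : b = a + 1)
    (hc : c = b + 1) (ha : (a : Fin 3) ∈ s) (hb' : (b : Fin 3) ∈ s) (hc' : (c : Fin 3) ∈ s) :
    2 < s.card :=
  Finset.two_lt_card.mpr ⟨_, ha, _, hb', _, hc', by simp [Fin.ext_iff, Fin.val_natCast]; omega⟩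

section Levels

variable {V : Type*} {G : SimpleGraph V} {f : V → ℕ}
  (hstep : ∀ ⦃u v⦄, G.Adj u v → f v = f u + 1 ∨ f u = f v + 1)
  (hpred : ∀ ⦃u v w⦄, G.Adj u v → G.Adj w v → f u + 1 = f v → f w + 1 = f v → u = w)
include hstep hpred

lemma level_add_one_of_adj_adj_of_ne {a b c : V} (hab : G.Adj a b) (hbc : G.Adj b c)
    (hac : a ≠ c) (hup : f b = f a + 1) : f c = f b + 1 :=
  (hstep hbc).resolve_right fun hdown ↦ hac (hpred hab hbc.symm hup.symm hdown.symm)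

lemma isStarColoring_natCast_comp : IsStarColoring G (fun v ↦ (f v : Fin 3)) := by
  refine ⟨fun u v h hc ↦ ?_, fun p₁ p₂ p₃ p₄ h₁₂ h₂₃ h₃₄ _ h₁₃ _ _ h₂₄ _ ↦ not_le.mpr ?_⟩
  · rw [Fin.ext_iff, Fin.val_natCast, Fin.val_natCast] at hc
    rcases hstep h with h | h <;> omega
  rcases hstep h₁₂ with up₁₂ | down₁₂
  · have up₂₃ := level_add_one_of_adj_adj_of_ne hstep hpred h₁₂ h₂₃ h₁₃ up₁₂
    exact Fin.two_lt_card_of_consecutive up₁₂ up₂₃ (by simp) (by simp) (by simp)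
  rcases hstep h₂₃ with up₂₃ | down₂₃
  · have up₃₄ := level_add_one_of_adj_adj_of_ne hstep hpred h₂₃ h₃₄ h₂₄ up₂₃
    exact Fin.two_lt_card_of_consecutive up₂₃ up₃₄ (by simp) (by simp) (by simp)
  · exact Fin.two_lt_card_of_consecutive down₂₃ down₁₂ (by simp) (by simp) (by simp)

end Levels

theorem stmt_14_general {V : Type*}
    (G : SimpleGraph V) (hG : G.IsAcyclic) :
    ∃ c : V → Fin 3, IsStarColoring G c :=
  ⟨_, isStarColoring_natCast_comp (fun _ _ ↦ hG.depth_eq_add_one_or_of_adj)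
    (fun _ _ _ ↦ hG.eq_of_adj_of_depth_add_one_eq)⟩

/-- Every forest admits a star coloring with 3 colors. -/
theorem stmt_14 {V : Type*} [Fintype V] [DecidableEq V]
    (G : SimpleGraph V) (hG : G.IsAcyclic) :
    ∃ c : V → Fin 3, IsStarColoring G c :=
  stmt_14_general G hG
end

section
/- If a graph G has a partition of its vertex set into sets I and F such that I is 2-independent (any two vertices of I are at distance greater than 2 in G) and G[F] is a forest, then G has a star coloring with 4 colors. -/
theorem Fin.ofNat_ne_ofNat_iff {n : ℕ} [NeZero n] (x y : ℕ) :
    Fin.ofNat n x ≠ Fin.ofNat n y ↔ x % n ≠ y % n := by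
  simp [Fin.ext_iff]

/-- The hypotheses are those satisfied by the depths along a path on four vertices of a rooted
forest: consecutive depths differ by one, and there is no strict local maximum. -/
theorem two_lt_card_ofNat_three {a b c d : ℕ} (hab : a = b + 1 ∨ b = a + 1)
    (hbc : b = c + 1 ∨ c = b + 1) (hcd : c = d + 1 ∨ d = c + 1)
    (hb : ¬ (b = a + 1 ∧ b = c + 1)) (hc : ¬ (c = b + 1 ∧ c = d + 1)) :
    2 < ({Fin.ofNat 3 a, Fin.ofNat 3 b, Fin.ofNat 3 c, Fin.ofNat 3 d} : Finset (Fin 3)).card := by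
  rw [Finset.two_lt_card]
  by_cases habc : (a = b + 1 ∧ b = c + 1) ∨ (b = a + 1 ∧ c = b + 1)
  · exact ⟨Fin.ofNat 3 a, by simp, Fin.ofNat 3 b, by simp, Fin.ofNat 3 c, by simp,
      by simp only [Fin.ofNat_ne_ofNat_iff]; omega⟩
  · exact ⟨Fin.ofNat 3 b, by simp, Fin.ofNat 3 c, by simp, Fin.ofNat 3 d, by simp,
      by simp only [Fin.ofNat_ne_ofNat_iff]; omega⟩

namespace SimpleGraph

variable {V : Type*} {G : SimpleGraph V}

theorem IsAcyclic.eq_of_adj_of_dist_eq_add_one (hG : G.IsAcyclic) {r x y z : V}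
    (hy : G.Adj x y) (hz : G.Adj x z) (hry : G.dist r x = G.dist r y + 1)
    (hrz : G.dist r x = G.dist r z + 1) : y = z := by
  classical
  obtain ⟨q, hq, hql⟩ := (Reachable.of_dist_ne_zero (by omega : G.dist r x ≠ 0)).exists_path_of_dist
  suffices parent : ∀ y, G.Adj x y → G.dist r x = G.dist r y + 1 → y = q.penultimate from
    (parent y hy hry).trans (parent z hz hrz).symm
  intro y hy hry
  by_cases hyq : y ∈ q.support
  · exact hG.eq_penultimate_of_adj_end hq hy hyq
  · obtain ⟨p, hp, hpl⟩ := (q.concat hy).reachable.exists_path_of_dist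
    have hpq : p = q.concat hy :=
      Subtype.mk.inj <| hG.subsingleton_path r y |>.elim ⟨p, hp⟩ ⟨_, hq.concat hyq hy⟩
    rw [hpq, Walk.length_concat] at hpl
    omega

theorem Adj.depth_eq_dist {u v : V} (h : G.Adj u v) :
    G.depth v = G.dist (G.connectedComponentMk u).out v := by
  rw [depth, ConnectedComponent.sound h.reachable]

theorem IsAcyclic.depth_eq_depth_add_one_of_adj (hG : G.IsAcyclic) {u v : V} (h : G.Adj u v) :
    G.depth u = G.depth v + 1 ∨ G.depth v = G.depth u + 1 := by
  rw [h.depth_eq_dist, depth]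
  refine hG.dist_eq_dist_add_one_of_adj_of_reachable _ h (ConnectedComponent.exact ?_)
  exact Quot.out_eq _

theorem IsAcyclic.eq_of_adj_of_depth_eq_add_one (hG : G.IsAcyclic) {x y z : V}
    (hy : G.Adj x y) (hz : G.Adj x z) (hxy : G.depth x = G.depth y + 1)
    (hxz : G.depth x = G.depth z + 1) : y = z := by
  rw [hy.depth_eq_dist] at hxy
  rw [hz.depth_eq_dist] at hxz
  exact hG.eq_of_adj_of_dist_eq_add_one hy hz hxy hxz

theorem IsAcyclic.isStarColoring_depth (hG : G.IsAcyclic) :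
    IsStarColoring G fun v => Fin.ofNat 3 (G.depth v) := by
  refine ⟨fun u v huv => ?_, fun p₁ p₂ p₃ p₄ h₁₂ h₂₃ h₃₄ _ h₁₃ _ _ h₂₄ _ => ?_⟩
  · rw [Fin.ofNat_ne_ofNat_iff]
    rcases hG.depth_eq_depth_add_one_of_adj huv with h | h <;> omega
  · refine not_le.2 (two_lt_card_ofNat_three (hG.depth_eq_depth_add_one_of_adj h₁₂)
      (hG.depth_eq_depth_add_one_of_adj h₂₃) (hG.depth_eq_depth_add_one_of_adj h₃₄) ?_ ?_)
    · exact fun ⟨h₂₁, h₂₃'⟩ => h₁₃ (hG.eq_of_adj_of_depth_eq_add_one h₁₂.symm h₂₃ h₂₁ h₂₃')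
    · exact fun ⟨h₃₂, h₃₄'⟩ => h₂₄ (hG.eq_of_adj_of_depth_eq_add_one h₂₃.symm h₃₄ h₃₂ h₃₄')

def IsTwoIndependent (G : SimpleGraph V) (I : Set V) : Prop :=
  I.Pairwise fun u v => ¬ G.Adj u v ∧ ∀ w, ¬ (G.Adj u w ∧ G.Adj w v)

end SimpleGraph

section FreshExtension

variable {V : Type*} {G : SimpleGraph V} {F : Set V} [DecidablePred (· ∈ F)] {k : ℕ}

def freshExtension (F : Set V) [DecidablePred (· ∈ F)] (c : F → Fin k) (v : V) : Fin (k + 1) :=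
  if h : v ∈ F then (c ⟨v, h⟩).castSucc else Fin.last k

theorem freshExtension_ne_of_adj {c : F → Fin k}
    (hc : ∀ ⦃u v⦄, (G.induce F).Adj u v → c u ≠ c v) (hI : G.IsTwoIndependent Fᶜ)
    {u v : V} (huv : G.Adj u v) : freshExtension F c u ≠ freshExtension F c v := by
  by_cases hu : u ∈ F <;> by_cases hv : v ∈ F
  · simpa [freshExtension, hu, hv] using hc (u := ⟨u, hu⟩) (v := ⟨v, hv⟩) huv
  · simp [freshExtension, hu, hv]
  · simpa [freshExtension, hu, hv] using (Fin.castSucc_ne_last _).symm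
  · exact absurd huv (hI (Set.mem_compl hu) (Set.mem_compl hv) huv.ne).1

theorem isStarColoring_freshExtension {c : F → Fin k} (hc : IsStarColoring (G.induce F) c)
    (hI : G.IsTwoIndependent Fᶜ) : IsStarColoring G (freshExtension F c) := by
  refine ⟨fun u v => freshExtension_ne_of_adj hc.1 hI,
    fun p₁ p₂ p₃ p₄ h₁₂ h₂₃ h₃₄ h₁₂' h₁₃ h₁₄ h₂₃' h₂₄ h₃₄' => ?_⟩
  set S : Finset (Fin (k + 1)) := {freshExtension F c p₁, freshExtension F c p₂,
    freshExtension F c p₃, freshExtension F c p₄}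
  have three : ∀ w x y, w ∉ F → G.Adj x y → x ∈ F → y ∈ F → freshExtension F c w ∈ S →
      freshExtension F c x ∈ S → freshExtension F c y ∈ S → ¬ S.card ≤ 2 := by
    intro w x y hw hxy hx hy hwS hxS hyS
    refine not_le.2 (Finset.two_lt_card.2 ⟨_, hwS, _, hxS, _, hyS, ?_, ?_,
      freshExtension_ne_of_adj hc.1 hI hxy⟩)
    · simpa [freshExtension, hw, hx] using (Fin.castSucc_ne_last _).symm
    · simpa [freshExtension, hw, hy] using (Fin.castSucc_ne_last _).symm
  by_cases h₂ : p₂ ∈ F <;> by_cases h₃ : p₃ ∈ F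
  · by_cases h₁ : p₁ ∈ F
    · by_cases h₄ : p₄ ∈ F
      · have hS : S = ({c ⟨p₁, h₁⟩, c ⟨p₂, h₂⟩, c ⟨p₃, h₃⟩, c ⟨p₄, h₄⟩} : Finset (Fin k)).image
            Fin.castSucc := by
          simp [S, freshExtension, h₁, h₂, h₃, h₄, Finset.image_insert]
        rw [hS, Finset.card_image_of_injective _ (Fin.castSucc_injective k)]
        exact hc.2 _ _ _ _ h₁₂ h₂₃ h₃₄ (by simpa) (by simpa) (by simpa) (by simpa) (by simpa)
          (by simpa)
      · exact three p₄ p₂ p₃ h₄ h₂₃ h₂ h₃ (by simp [S]) (by simp [S]) (by simp [S])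
    · exact three p₁ p₂ p₃ h₁ h₂₃ h₂ h₃ (by simp [S]) (by simp [S]) (by simp [S])
  -- Two vertices outside `F` are at distance more than two, so a path leaves `F` only at its ends.
  · have h₁ : p₁ ∈ F := by_contra fun h₁ => (hI h₁ h₃ h₁₃).2 p₂ ⟨h₁₂, h₂₃⟩
    exact three p₃ p₁ p₂ h₃ h₁₂ h₁ h₂ (by simp [S]) (by simp [S]) (by simp [S])
  · have h₄ : p₄ ∈ F := by_contra fun h₄ => (hI h₂ h₄ h₂₄).2 p₃ ⟨h₂₃, h₃₄⟩
    exact three p₂ p₃ p₄ h₂ h₃₄ h₃ h₄ (by simp [S]) (by simp [S]) (by simp [S])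
  · exact absurd h₂₃ (hI h₂ h₃ h₂₃').1

end FreshExtension

theorem stmt_15_general {V : Type*} (G : SimpleGraph V)
    (I F : Set V) (hcover : I ∪ F = Set.univ)
    (hI : ∀ u ∈ I, ∀ v ∈ I, u ≠ v →
      ¬ G.Adj u v ∧ ∀ w : V, ¬ (G.Adj u w ∧ G.Adj w v))
    (hF : (G.induce F).IsAcyclic) :
    ∃ c : V → Fin 4, IsStarColoring G c := by
  classical
  have hFI : Fᶜ ⊆ I := fun v hv => (hcover.ge (Set.mem_univ v)).resolve_right hv
  have hI' : G.IsTwoIndependent Fᶜ := fun u hu v hv => hI u (hFI hu) v (hFI hv)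
  exact ⟨_, isStarColoring_freshExtension hF.isStarColoring_depth hI'⟩

/-- If `V(G)` has a partition into a 2-independent set `I` (any two distinct
vertices of `I` are at distance greater than 2: non-adjacent with no common neighbor) and a
set `F` inducing a forest, then `G` has a star coloring with 4 colors. -/
theorem stmt_15 {V : Type*} [Fintype V] [DecidableEq V] (G : SimpleGraph V)
    (I F : Set V) (hdisj : Disjoint I F) (hcover : I ∪ F = Set.univ)
    (hI : ∀ u ∈ I, ∀ v ∈ I, u ≠ v →
      ¬ G.Adj u v ∧ ∀ w : V, ¬ (G.Adj u w ∧ G.Adj w v))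
    (hF : (G.induce F).IsAcyclic) :
    ∃ c : V → Fin 4, IsStarColoring G c :=
  stmt_15_general G I F hcover hI hF
end

section
/- For every positive integer k, the graph G_n obtained from the complete graph K_n by subdividing every edge once satisfies mad(G_n) = 4 - 8/(n+1), and if n > k² + k then G_n has no star coloring with k colors. -/
/-- The graph obtained from the complete graph `K_n` by subdividing every edge once: one
branch vertex for each vertex of `K_n`, and one degree-2 vertex for each edge of `K_n`,
adjacent to the two endpoints of that edge. -/
def subdividedComplete (n : ℕ) :
    SimpleGraph (Fin n ⊕ {e : Sym2 (Fin n) // ¬ e.IsDiag}) :=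
  SimpleGraph.fromRel fun x y =>
    match x, y with
    | Sum.inl u, Sum.inr e => u ∈ (e : Sym2 (Fin n))
    | _, _ => False

/-!
Every edge of `G_n` joins a branch vertex (degree `n - 1`) to a subdivision vertex (degree `2`).
Counting the edges of a subgraph `H` from either side gives `|E(H)| ≤ (n - 1)·|A|` and
`|E(H)| ≤ 2·|B|` for its two vertex classes `A`, `B`, hence `(n + 1)·|E(H)| ≤ 2(n - 1)·|V(H)|`,
with equality for `H = G_n`.

In a star colouring, fix a branch vertex `u`. For every other branch vertex `v` of the colour of
`u`, the subdivision vertex `w` of `uv` has a colour different from that of `u` and of every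
other subdivision vertex `w'` at `u`, as otherwise `v w u w'` would be a bicoloured path. So each
colour class of branch vertices has at most `k` elements, and `n ≤ k²`.
-/

namespace SimpleGraph

open Finset

variable {V : Type*} [Fintype V] {G : SimpleGraph V} [DecidableRel G.Adj] {a b : ℕ}

theorem IsBipartiteWith.mul_card_edgeFinset_le {s t : Finset V} (h : G.IsBipartiteWith s t)
    (ha : ∀ v ∈ s, G.degree v ≤ a) (hb : ∀ w ∈ t, G.degree w ≤ b) :
    (a + b) * #G.edgeFinset ≤ a * b * (#s + #t) := by
  have hs : #G.edgeFinset ≤ a * #s := by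
    rw [← isBipartiteWith_sum_degrees_eq_card_edges h, mul_comm]
    exact sum_le_card_nsmul _ _ _ ha
  have ht : #G.edgeFinset ≤ b * #t := by
    rw [← isBipartiteWith_sum_degrees_eq_card_edges' h, mul_comm]
    exact sum_le_card_nsmul _ _ _ hb
  calc (a + b) * #G.edgeFinset = a * #G.edgeFinset + b * #G.edgeFinset := add_mul _ _ _
    _ ≤ a * (b * #t) + b * (a * #s) := by gcongr
    _ = a * b * (#s + #t) := by ring

theorem IsBipartiteWith.mul_ncard_edgeSet_le {S T : Set V} (h : G.IsBipartiteWith S T)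
    (ha : ∀ v ∈ S, G.degree v ≤ a) (hb : ∀ w ∈ T, G.degree w ≤ b) (H : G.Subgraph) :
    (a + b) * H.edgeSet.ncard ≤ a * b * H.verts.ncard := by
  classical
  set s : Finset V := {v | v ∈ H.verts ∧ v ∈ S}
  set t : Finset V := {v | v ∈ H.verts ∧ v ∈ T}
  have hst : Disjoint s t := by
    rw [← disjoint_coe]
    refine h.disjoint.mono ?_ ?_ <;> intro v hv <;> simp_all [s, t]
  have hH : H.spanningCoe.IsBipartiteWith s t := by
    refine ⟨disjoint_coe.2 hst, fun v w hvw => ?_⟩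
    have := h.mem_of_adj hvw.adj_sub
    simp [s, t, H.edge_vert hvw, H.edge_vert hvw.symm, this]
  have hdeg {v : V} : H.spanningCoe.degree v ≤ G.degree v := degree_le_of_le H.spanningCoe_le
  have key := hH.mul_card_edgeFinset_le (fun v hv => (hdeg.trans (ha v (by simp_all [s]))))
    (fun v hv => (hdeg.trans (hb v (by simp_all [t]))))
  have hE : #H.spanningCoe.edgeFinset = H.edgeSet.ncard := by
    rw [edgeFinset, ← Set.ncard_eq_toFinset_card', H.edgeSet_spanningCoe]
  have hV : #s + #t ≤ H.verts.ncard := by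
    rw [← card_union_of_disjoint hst, ← Set.ncard_coe_finset]
    exact Set.ncard_le_ncard (by intro v; simp_all [s, t]; tauto)
  rw [hE] at key
  exact key.trans (Nat.mul_le_mul_left _ hV)

end SimpleGraph

section SubdividedComplete

open Finset SimpleGraph Sum

variable {n : ℕ}

@[simp]
lemma subdividedComplete_adj_inl_inr {u : Fin n} {e : {e : Sym2 (Fin n) // ¬ e.IsDiag}} :
    (subdividedComplete n).Adj (inl u) (inr e) ↔ u ∈ (e : Sym2 (Fin n)) := by
  simp [subdividedComplete]

@[simp]
lemma subdividedComplete_adj_inr_inl {u : Fin n} {e : {e : Sym2 (Fin n) // ¬ e.IsDiag}} :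
    (subdividedComplete n).Adj (inr e) (inl u) ↔ u ∈ (e : Sym2 (Fin n)) := by
  simp [subdividedComplete]

@[simp]
lemma subdividedComplete_not_adj_inl_inl {u v : Fin n} :
    ¬ (subdividedComplete n).Adj (inl u) (inl v) := by
  simp [subdividedComplete]

@[simp]
lemma subdividedComplete_not_adj_inr_inr {e f : {e : Sym2 (Fin n) // ¬ e.IsDiag}} :
    ¬ (subdividedComplete n).Adj (inr e) (inr f) := by
  simp [subdividedComplete]

lemma subdividedComplete_isBipartiteWith :
    (subdividedComplete n).IsBipartiteWith (Set.range inl) (Set.range inr) := by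
  refine ⟨by simp [Set.disjoint_left], ?_⟩
  rintro (u | e) (v | f) h <;> simp_all

/-- The subdivision vertex of the edge `uv` of `K_n`; a junk branch vertex when `u = v`. -/
def subdivVertex (u v : Fin n) : Fin n ⊕ {e : Sym2 (Fin n) // ¬ e.IsDiag} :=
  if h : u = v then inl u else inr ⟨s(u, v), by simpa using h⟩

lemma subdividedComplete_adj_subdivVertex_left {u v : Fin n} (h : u ≠ v) :
    (subdividedComplete n).Adj (inl u) (subdivVertex u v) := by
  simp [subdivVertex, h]

lemma subdividedComplete_adj_subdivVertex_right {u v : Fin n} (h : u ≠ v) :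
    (subdividedComplete n).Adj (inl v) (subdivVertex u v) := by
  simp [subdivVertex, h]

lemma subdivVertex_injOn (u : Fin n) : Set.InjOn (subdivVertex u) {u}ᶜ := by
  intro v hv w hw h
  simp_all [subdivVertex, eq_comm]

lemma subdivVertex_surjOn_neighborSet (u : Fin n) :
    Set.SurjOn (subdivVertex u) {u}ᶜ ((subdividedComplete n).neighborSet (inl u)) := by
  rintro (v | ⟨e, he⟩) hv
  · simp at hv
  · obtain ⟨v, rfl⟩ : ∃ v, e = s(u, v) := ⟨_, (Sym2.other_spec (by simpa using hv)).symm⟩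
    have huv : u ≠ v := by simpa using he
    exact ⟨v, huv.symm, by simp [subdivVertex, huv]⟩

open scoped Classical in
lemma subdividedComplete_degree_inl_le (u : Fin n) :
    (subdividedComplete n).degree (inl u) ≤ n - 1 := by
  calc (subdividedComplete n).degree (inl u)
      = #((subdividedComplete n).neighborFinset (inl u)) := (card_neighborFinset_eq_degree ..).symm
    _ ≤ #(univ.erase u) := card_le_card_of_surjOn _ <| by
      simpa [Set.compl_eq_univ_sdiff] using subdivVertex_surjOn_neighborSet u
    _ = n - 1 := by simp

open scoped Classical in
lemma subdividedComplete_degree_inr (e : {e : Sym2 (Fin n) // ¬ e.IsDiag}) :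
    (subdividedComplete n).degree (inr e) = 2 := by
  have hnbr : (subdividedComplete n).neighborFinset (inr e) =
      (e : Sym2 (Fin n)).toFinset.map .inl := by
    ext (v | f) <;> simp
  rw [← card_neighborFinset_eq_degree, hnbr, card_map, Sym2.card_toFinset_of_not_isDiag _ e.2]

open scoped Classical in
theorem subdividedComplete_two_mul_ncard_edgeSet_div_le (hn : 0 < n)
    (H : (subdividedComplete n).Subgraph) (hH : H.verts.Nonempty) :
    (2 * H.edgeSet.ncard : ℚ) / H.verts.ncard ≤ 4 - 8 / ((n : ℚ) + 1) := by
  have key := subdividedComplete_isBipartiteWith.mul_ncard_edgeSet_le (a := n - 1) (b := 2)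
    (by rintro _ ⟨u, rfl⟩; exact subdividedComplete_degree_inl_le u)
    (by rintro _ ⟨e, rfl⟩; exact (subdividedComplete_degree_inr e).le) H
  have hq : ((n : ℚ) + 1) * H.edgeSet.ncard ≤ 2 * ((n : ℚ) - 1) * H.verts.ncard := by
    have := (Nat.cast_le (α := ℚ)).2 key
    push_cast [Nat.cast_pred hn] at this
    linarith
  have hV : (0 : ℚ) < H.verts.ncard := by exact_mod_cast (Set.ncard_pos).2 hH
  rw [div_le_iff₀ hV, show (4 : ℚ) - 8 / (n + 1) = 4 * (n - 1) / (n + 1) by field_simp; ring,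
    div_mul_eq_mul_div, le_div_iff₀ (by positivity)]
  linarith

open scoped Classical in
theorem subdividedComplete_card_edgeFinset :
    #(subdividedComplete n).edgeFinset = 2 * n.choose 2 := by
  rw [← isBipartiteWith_sum_degrees_eq_card_edges' (s := univ.image inl) (t := univ.image inr)
    (by simpa using subdividedComplete_isBipartiteWith), sum_image inr_injective.injOn]
  simp only [subdividedComplete_degree_inr, sum_const, card_univ, Sym2.card_subtype_not_diag,
    Fintype.card_fin, smul_eq_mul, mul_comm]

theorem subdividedComplete_two_mul_ncard_edgeSet_top_div (hn : 0 < n) :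
    (2 * (⊤ : (subdividedComplete n).Subgraph).edgeSet.ncard : ℚ) /
      (⊤ : (subdividedComplete n).Subgraph).verts.ncard = 4 - 8 / ((n : ℚ) + 1) := by
  classical
  have hE : (⊤ : (subdividedComplete n).Subgraph).edgeSet.ncard = 2 * n.choose 2 := by
    rw [Subgraph.edgeSet_top, Set.ncard_eq_toFinset_card', ← edgeFinset,
      subdividedComplete_card_edgeFinset]
  have hV : (⊤ : (subdividedComplete n).Subgraph).verts.ncard = n + n.choose 2 := by
    rw [Subgraph.verts_top, Set.ncard_univ, Nat.card_eq_fintype_card, Fintype.card_sum,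
      Fintype.card_fin, Sym2.card_subtype_not_diag, Fintype.card_fin]
  have hn' : (1 : ℚ) ≤ n := by exact_mod_cast hn
  have hV0 : (n : ℚ) + n * (n - 1) / 2 ≠ 0 := by nlinarith
  rw [hE, hV]
  push_cast [Nat.cast_choose_two]
  rw [div_eq_iff hV0]
  field_simp
  ring

end SubdividedComplete

section StarColoring

open Finset Sum

theorem IsStarColoring.apply_ne_of_adj {V : Type*} {G : SimpleGraph V} {k : ℕ} {c : V → Fin k}
    (hc : IsStarColoring G c) {v w₁ u w₂ : V} (h₁ : G.Adj v w₁) (h₂ : G.Adj w₁ u)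
    (h₃ : G.Adj u w₂) (hvu : v ≠ u) (hw : w₁ ≠ w₂) (hcw : c w₁ = c w₂) : c v ≠ c u := by
  intro hcv
  have hvw₂ : v ≠ w₂ := by
    rintro rfl
    exact hc.1 h₁ hcw.symm
  refine hc.2 v w₁ u w₂ h₁ h₂ h₃ h₁.ne hvu hvw₂ h₂.ne hw h₃.ne ?_
  rw [hcv, hcw]
  simpa using card_le_two

variable {n k : ℕ} {c : Fin n ⊕ {e : Sym2 (Fin n) // ¬ e.IsDiag} → Fin k}

theorem IsStarColoring.card_filter_inl_le (hc : IsStarColoring (subdividedComplete n) c)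
    (α : Fin k) : #{u | c (inl u) = α} ≤ k := by
  set S : Finset (Fin n) := {u | c (inl u) = α}
  obtain hS | ⟨u, hu⟩ := S.eq_empty_or_nonempty
  · simp [hS]
  have hcu : c (inl u) = α := (mem_filter.1 hu).2
  have hne {v : Fin n} (hv : v ∈ S.erase u) : v ≠ u := ne_of_mem_erase hv
  have hmaps : ∀ v ∈ S.erase u, c (subdivVertex u v) ∈ univ.erase α := fun v hv =>
    mem_erase.2 ⟨hcu ▸ (hc.1 (subdividedComplete_adj_subdivVertex_left (hne hv).symm)).symm,
      mem_univ _⟩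
  have hinj : Set.InjOn (fun v => c (subdivVertex u v)) (S.erase u) := by
    intro v hv w hw hvw
    by_contra hvw'
    refine hc.apply_ne_of_adj (subdividedComplete_adj_subdivVertex_right (hne hv).symm)
      (subdividedComplete_adj_subdivVertex_left (hne hv).symm).symm
      (subdividedComplete_adj_subdivVertex_left (hne hw).symm) (by simpa using hne hv)
      (fun h => hvw' (subdivVertex_injOn u (hne hv) (hne hw) h)) hvw ?_
    rw [hcu, (mem_filter.1 (mem_of_mem_erase hv)).2]
  have := card_le_card_of_injOn _ hmaps hinj
  rw [card_erase_of_mem hu, card_erase_of_mem (mem_univ _), card_univ, Fintype.card_fin] at this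
  omega

theorem IsStarColoring.le_sq (hc : IsStarColoring (subdividedComplete n) c) : n ≤ k ^ 2 :=
  calc n = #(univ : Finset (Fin n)) := (card_fin n).symm
    _ ≤ k * #(univ.image fun u => c (inl u)) :=
      card_le_mul_card_image _ _ fun α _ => hc.card_filter_inl_le α
    _ ≤ k * k := Nat.mul_le_mul_left _ ((card_le_univ _).trans (Fintype.card_fin k).le)
    _ = k ^ 2 := (sq k).symm

end StarColoring

theorem stmt_17_general (k n : ℕ) (hn : 0 < n) :
    (∀ H : (subdividedComplete n).Subgraph, H.verts.Nonempty →
      (2 * H.edgeSet.ncard : ℚ) / (H.verts.ncard : ℚ) ≤ 4 - 8 / ((n : ℚ) + 1)) ∧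
    (∃ H : (subdividedComplete n).Subgraph, H.verts.Nonempty ∧
      (2 * H.edgeSet.ncard : ℚ) / (H.verts.ncard : ℚ) = 4 - 8 / ((n : ℚ) + 1)) ∧
    (n > k ^ 2 + k → ¬ ∃ c : Fin n ⊕ {e : Sym2 (Fin n) // ¬ e.IsDiag} → Fin k,
      IsStarColoring (subdividedComplete n) c) := by
  refine ⟨subdividedComplete_two_mul_ncard_edgeSet_div_le hn,
    ⟨⊤, ⟨.inl ⟨0, hn⟩, trivial⟩, subdividedComplete_two_mul_ncard_edgeSet_top_div hn⟩, ?_⟩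
  rintro hbig ⟨c, hc⟩
  have := hc.le_sq
  omega

/-- For every positive `k`, the graph `G_n` obtained from `K_n` by
subdividing every edge once satisfies `mad(G_n) = 4 - 8/(n+1)` (the ratio `2|E(H)|/|V(H)|`
is at most this value for every nonempty subgraph `H`, with equality attained), and if
`n > k² + k` then `G_n` has no star coloring with `k` colors. -/
theorem stmt_17 (k n : ℕ) (hk : 0 < k) (hn : 0 < n) :
    (∀ H : (subdividedComplete n).Subgraph, H.verts.Nonempty →
      (2 * H.edgeSet.ncard : ℚ) / (H.verts.ncard : ℚ) ≤ 4 - 8 / ((n : ℚ) + 1)) ∧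
    (∃ H : (subdividedComplete n).Subgraph, H.verts.Nonempty ∧
      (2 * H.edgeSet.ncard : ℚ) / (H.verts.ncard : ℚ) = 4 - 8 / ((n : ℚ) + 1)) ∧
    (n > k ^ 2 + k → ¬ ∃ c : Fin n ⊕ {e : Sym2 (Fin n) // ¬ e.IsDiag} → Fin k,
      IsStarColoring (subdividedComplete n) c) :=
  stmt_17_general k n hn
end

section
/- If δ(G) = 2 and the average degree of G is less than 8/3, then G has two adjacent 2-vertices, or some component of the subgraph H of G induced by the degree-3 vertices is a tree such that every edge of G with exactly one endpoint in that component has its other endpoint of degree 2 in G. -/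
/-!
Discharging. Give each vertex `v` the charge `3 d(v) - 8`, so that the total is `6|E| - 8|V| < 0`.
Every vertex sends `1` to each neighbour of degree `2`, and every vertex of degree `≥ 4` sends `1`
to each neighbour of degree `3`. If no two `2`-vertices are adjacent, a `2`-vertex ends with `0`
and a vertex of degree `d ≥ 4` with at least `2d - 8 ≥ 0`, while a `3`-vertex ends with
`1 + r - t`, where `r` and `t` count its neighbours of degree `≥ 4` and `2`. Over a component of
`H` with `k` vertices and `e` edges this adds up to `2(e + R - k)`, `R` the sum of the `r`.
Connectivity gives `e ≥ k - 1`, with equality only for a tree, and a tree component that is not as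
in the conclusion has a neighbour of degree `≥ 4`, so `R ≥ 1`. Hence the total charge is
nonnegative.
-/

open Finset

namespace SimpleGraph

variable {V : Type*} [Fintype V] (G : SimpleGraph V) [DecidableRel G.Adj]

theorem sum_card_in_eq_sum_card_out (R : V → V → Prop) [DecidableRel R] :
    ∑ v, #{u ∈ G.neighborFinset v | R u v} = ∑ v, #{u ∈ G.neighborFinset v | R v u} := by
  simp only [card_filter, neighborFinset_eq_filter, sum_filter]
  rw [sum_comm]
  simp only [adj_comm]

def Sends (a b : V) : Prop :=
  G.degree b = 2 ∨ 4 ≤ G.degree a ∧ G.degree b = 3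

instance : DecidableRel G.Sends := fun _ _ => inferInstanceAs (Decidable (_ ∨ _))

def charge (v : V) : ℤ :=
  3 * G.degree v - 8 + #{u ∈ G.neighborFinset v | G.Sends u v} -
    #{u ∈ G.neighborFinset v | G.Sends v u}

theorem sum_charge :
    ∑ v, G.charge v = 6 * #G.edgeFinset - 8 * Fintype.card V := by
  have hdeg : ∑ v, (G.degree v : ℤ) = 2 * #G.edgeFinset := by
    exact_mod_cast G.sum_degrees_eq_twice_card_edges
  have hmove : ∑ v, (#{u ∈ G.neighborFinset v | G.Sends u v} : ℤ) =
      ∑ v, (#{u ∈ G.neighborFinset v | G.Sends v u} : ℤ) := by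
    exact_mod_cast G.sum_card_in_eq_sum_card_out G.Sends
  simp only [charge, sum_sub_distrib, sum_add_distrib, ← mul_sum, hdeg, hmove, sum_const,
    card_univ, nsmul_eq_mul]
  ring

def neighborsWithDegree (p : ℕ → Prop) [DecidablePred p] (v : V) : Finset V :=
  {u ∈ G.neighborFinset v | p (G.degree u)}

theorem charge_eq_zero_of_degree_eq_two {v : V} (hv : G.degree v = 2)
    (hnbrs : ∀ w, G.Adj v w → G.degree w ≠ 2) : G.charge v = 0 := by
  have hin : {u ∈ G.neighborFinset v | G.Sends u v} = G.neighborFinset v :=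
    filter_true_of_mem fun _ _ => Or.inl hv
  have hout : {u ∈ G.neighborFinset v | G.Sends v u} = ∅ :=
    filter_eq_empty_iff.mpr fun w hw hsend => by
      have := hnbrs w ((G.mem_neighborFinset v w).mp hw)
      rcases hsend with h | h <;> omega
  simp [charge, hin, hout, hv]

theorem charge_nonneg_of_four_le_degree {v : V} (hv : 4 ≤ G.degree v) : 0 ≤ G.charge v := by
  have : #{u ∈ G.neighborFinset v | G.Sends v u} ≤ G.degree v :=
    (card_filter_le _ _).trans (G.card_neighborFinset_eq_degree v).le
  simp only [charge]
  omega

theorem charge_of_degree_eq_three {v : V} (hv : G.degree v = 3) :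
    G.charge v =
      1 + #(G.neighborsWithDegree (4 ≤ ·) v) - #(G.neighborsWithDegree (· = 2) v) := by
  have hin : {u ∈ G.neighborFinset v | G.Sends u v} = G.neighborsWithDegree (4 ≤ ·) v :=
    filter_congr fun u _ => by simp only [Sends]; omega
  have hout : {u ∈ G.neighborFinset v | G.Sends v u} = G.neighborsWithDegree (· = 2) v :=
    filter_congr fun u _ => by simp only [Sends]; omega
  rw [charge, hin, hout, hv]
  ring

theorem card_neighborsWithDegree_two_add_three_add_ge_four (hdeg : ∀ u, 2 ≤ G.degree u)
    (v : V) :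
    #(G.neighborsWithDegree (· = 2) v) + #(G.neighborsWithDegree (· = 3) v) +
      #(G.neighborsWithDegree (4 ≤ ·) v) = G.degree v := by
  simp only [neighborsWithDegree, card_filter, ← sum_add_distrib]
  rw [← card_neighborFinset_eq_degree, card_eq_sum_ones]
  refine sum_congr rfl fun u _ => ?_
  have := hdeg u
  split_ifs <;> omega

theorem Connected.card_le_card_edgeSet_of_not_isAcyclic {W : Type*} [Finite W]
    {H : SimpleGraph W} (hconn : H.Connected) (hcyc : ¬H.IsAcyclic) :
    Nat.card W ≤ Nat.card H.edgeSet := by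
  have := hconn.card_vert_le_card_edgeSet_add_one
  have : Nat.card H.edgeSet + 1 ≠ Nat.card W := fun h =>
    hcyc (isTree_iff_connected_and_card.mpr ⟨hconn, h⟩).isAcyclic
  omega

theorem sum_card_inter_neighborFinset_eq_twice_card_edgeSet_induce [DecidableEq V]
    (C : Finset V) :
    ∑ u ∈ C, #(G.neighborFinset u ∩ C) = 2 * Nat.card (G.induce (C : Set V)).edgeSet := by
  rw [Nat.card_eq_fintype_card, ← edgeFinset_card, ← sum_degrees_eq_twice_card_edges,
    ← sum_coe_sort C]
  refine sum_congr rfl fun u _ => ?_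
  have hmap := G.map_neighborFinset_induce (s := (C : Set V)) u
  rw [toFinset_coe] at hmap
  rw [← hmap, card_map]
  convert card_neighborFinset_eq_degree _ _

section Component

variable {G} {C : Finset V} (hdeg : ∀ u, 2 ≤ G.degree u)
  (hclosed : ∀ u ∈ C, ∀ x, G.Adj u x → G.degree x = 3 → x ∈ C)
include hdeg hclosed

theorem charge_of_mem_closed [DecidableEq V] (hC : ∀ u ∈ C, G.degree u = 3) {u : V}
    (hu : u ∈ C) :
    G.charge u = 2 * #(G.neighborsWithDegree (4 ≤ ·) u) + #(G.neighborFinset u ∩ C) - 2 := by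
  have hthree : G.neighborsWithDegree (· = 3) u = G.neighborFinset u ∩ C := by
    ext x
    simp only [neighborsWithDegree, mem_filter, mem_inter, mem_neighborFinset]
    exact ⟨fun h => ⟨h.1, hclosed u hu x h.1 h.2⟩, fun h => ⟨h.1, hC x h.2⟩⟩
  have := G.card_neighborsWithDegree_two_add_three_add_ge_four hdeg u
  rw [hthree, hC u hu] at this
  rw [G.charge_of_degree_eq_three (hC u hu)]
  omega

theorem card_le_card_edgeSet_induce_add_sum_card_neighborsWithDegree
    (hconn : (G.induce (C : Set V)).Connected)
    (hexit : (G.induce (C : Set V)).IsAcyclic →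
      ∃ u ∈ C, ∃ x, x ∉ C ∧ G.Adj u x ∧ G.degree x ≠ 2) :
    #C ≤ Nat.card (G.induce (C : Set V)).edgeSet +
      ∑ u ∈ C, #(G.neighborsWithDegree (4 ≤ ·) u) := by
  have hk : Nat.card (C : Set V) = #C := by simp
  by_cases hacyc : (G.induce (C : Set V)).IsAcyclic
  · obtain ⟨u, hu, x, hxC, hadj, hx2⟩ := hexit hacyc
    have hx4 : 4 ≤ G.degree x := by
      have := hdeg x
      have : G.degree x ≠ 3 := fun h => hxC (hclosed u hu x hadj h)
      omega
    have hru : 1 ≤ #(G.neighborsWithDegree (4 ≤ ·) u) :=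
      card_pos.mpr ⟨x, by simp [neighborsWithDegree, hadj, hx4]⟩
    have := hconn.card_vert_le_card_edgeSet_add_one
    have := single_le_sum (fun u _ => Nat.zero_le #(G.neighborsWithDegree (4 ≤ ·) u)) hu
    omega
  · have := hconn.card_le_card_edgeSet_of_not_isAcyclic hacyc
    omega

theorem sum_charge_nonneg_of_closed [DecidableEq V] (hC : ∀ u ∈ C, G.degree u = 3)
    (hconn : (G.induce (C : Set V)).Connected)
    (hexit : (G.induce (C : Set V)).IsAcyclic →
      ∃ u ∈ C, ∃ x, x ∉ C ∧ G.Adj u x ∧ G.degree x ≠ 2) :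
    0 ≤ ∑ u ∈ C, G.charge u := by
  have hcard : (#C : ℤ) ≤ Nat.card (G.induce (C : Set V)).edgeSet +
      ∑ u ∈ C, (#(G.neighborsWithDegree (4 ≤ ·) u) : ℤ) := by
    exact_mod_cast card_le_card_edgeSet_induce_add_sum_card_neighborsWithDegree hdeg hclosed
      hconn hexit
  have hedges : ∑ u ∈ C, (#(G.neighborFinset u ∩ C) : ℤ) =
      2 * Nat.card (G.induce (C : Set V)).edgeSet := by
    exact_mod_cast G.sum_card_inter_neighborFinset_eq_twice_card_edgeSet_induce C
  rw [sum_congr rfl fun u => charge_of_mem_closed hdeg hclosed hC]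
  simp only [sum_sub_distrib, sum_add_distrib, ← mul_sum, sum_const, nsmul_eq_mul]
  linarith

end Component

/-- The graph `H`, with the vertices of other degrees kept as isolated vertices. -/
def degreeThreeGraph : SimpleGraph V :=
  (G.induce {v | G.degree v = 3}).spanningCoe

theorem degreeThreeGraph_adj {a b : V} :
    G.degreeThreeGraph.Adj a b ↔ G.Adj a b ∧ G.degree a = 3 ∧ G.degree b = 3 := by
  simp [degreeThreeGraph]

namespace ConnectedComponent

variable {G} (c : G.degreeThreeGraph.ConnectedComponent)

theorem degree_eq_three_of_mem_supp {v u : V} (hv : v ∈ c.supp) (hv3 : G.degree v = 3)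
    (hu : u ∈ c.supp) : G.degree u = 3 := by
  by_cases huv : u = v
  · rwa [huv]
  obtain ⟨w, huw⟩ := (mem_support _).mp
    (mem_support_of_reachable huv (c.reachable_of_mem_supp hu hv))
  exact (G.degreeThreeGraph_adj.mp huw).2.1

theorem mem_supp_of_adj {u x : V} (hu : u ∈ c.supp) (hu3 : G.degree u = 3) (hadj : G.Adj u x)
    (hx3 : G.degree x = 3) : x ∈ c.supp :=
  c.mem_supp_of_adj_mem_supp hu (G.degreeThreeGraph_adj.mpr ⟨hadj, hu3, hx3⟩)

theorem connected_induce_supp (hc : ∀ u ∈ c.supp, G.degree u = 3) :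
    (G.induce c.supp).Connected := by
  have : G.induce c.supp = c.toSimpleGraph := by
    ext a b
    simp [toSimpleGraph, degreeThreeGraph_adj, hc a a.2, hc b b.2]
  exact this ▸ c.connected_toSimpleGraph

end ConnectedComponent

theorem eight_mul_card_le_six_mul_card_edgeFinset (hdeg : ∀ v, 2 ≤ G.degree v)
    (hpair : ∀ v w, G.Adj v w → G.degree v = 2 → G.degree w ≠ 2)
    (hexit : ∀ T : Set V, T.Nonempty → (∀ v ∈ T, G.degree v = 3) →
      (∀ u ∈ T, ∀ v, G.Adj u v → G.degree v = 3 → v ∈ T) →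
      (G.induce T).Connected → (G.induce T).IsAcyclic →
      ∃ u ∈ T, ∃ v, v ∉ T ∧ G.Adj u v ∧ G.degree v ≠ 2) :
    8 * Fintype.card V ≤ 6 * #G.edgeFinset := by
  classical
  suffices 0 ≤ ∑ v, G.charge v by rw [sum_charge] at this; omega
  rw [← sum_fiberwise (g := G.degreeThreeGraph.connectedComponentMk)]
  refine sum_nonneg fun c _ => ?_
  set C : Finset V := {v | G.degreeThreeGraph.connectedComponentMk v = c}
  have hC : (C : Set V) = c.supp := by ext; simp [C, ConnectedComponent.mem_supp_iff]
  by_cases hcubic : ∃ v ∈ c.supp, G.degree v = 3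
  · obtain ⟨v, hv, hv3⟩ := hcubic
    have hc3 : ∀ u ∈ c.supp, G.degree u = 3 := fun u => c.degree_eq_three_of_mem_supp hv hv3
    have hconn := c.connected_induce_supp hc3
    have hclosed : ∀ u ∈ c.supp, ∀ x, G.Adj u x → G.degree x = 3 → x ∈ c.supp :=
      fun u hu _ => c.mem_supp_of_adj hu (hc3 u hu)
    rw [← hC] at hv hc3 hconn hclosed
    exact sum_charge_nonneg_of_closed hdeg hclosed hc3 hconn (hexit C ⟨v, hv⟩ hc3 hclosed hconn)
  · push Not at hcubic
    refine sum_nonneg fun v hv => ?_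
    have hv3 := hcubic v (by simpa [C, ConnectedComponent.mem_supp_iff] using hv)
    rcases (hdeg v).eq_or_lt with hv2 | hv4
    · exact (G.charge_eq_zero_of_degree_eq_two hv2.symm fun w hw => hpair v w hw hv2.symm).ge
    · exact G.charge_nonneg_of_four_le_degree (by omega)

end SimpleGraph

theorem stmt_18_general {V : Type*} [Fintype V]
    (G : SimpleGraph V) [DecidableRel G.Adj] (hδ : G.minDegree = 2)
    (havg : (2 * G.edgeFinset.card : ℚ) / (Fintype.card V : ℚ) < 8 / 3) :
    (∃ v w : V, G.Adj v w ∧ G.degree v = 2 ∧ G.degree w = 2) ∨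
    (∃ T : Set V, T.Nonempty ∧
      (∀ v ∈ T, G.degree v = 3) ∧
      (∀ u ∈ T, ∀ v : V, G.Adj u v → G.degree v = 3 → v ∈ T) ∧
      (G.induce T).Connected ∧ (G.induce T).IsAcyclic ∧
      (∀ u ∈ T, ∀ v : V, v ∉ T → G.Adj u v → G.degree v = 2)) := by
  by_contra! ⟨hpair, hexit⟩
  have : Nonempty V := by
    by_contra! hV
    simp [SimpleGraph.minDegree_of_subsingleton] at hδ
  have hbound := G.eight_mul_card_le_six_mul_card_edgeFinset
    (fun v => hδ ▸ G.minDegree_le_degree v) hpair hexit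
  have hV : (0 : ℚ) < Fintype.card V := by exact_mod_cast Fintype.card_pos
  rw [div_lt_iff₀ hV] at havg
  have : (8 * Fintype.card V : ℚ) ≤ 6 * #G.edgeFinset := by exact_mod_cast hbound
  linarith

/-- If `δ(G) = 2` and the average degree of `G` is less than `8/3`, then
`G` has two adjacent 2-vertices, or some component `T` of the subgraph of `G` induced by the
degree-3 vertices is a tree such that every edge of `G` with exactly one endpoint in `T` has
its other endpoint of degree 2 in `G`. -/
theorem stmt_18 {V : Type*} [Fintype V] [DecidableEq V] [Nonempty V]
    (G : SimpleGraph V) [DecidableRel G.Adj] (hδ : G.minDegree = 2)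
    (havg : (2 * G.edgeFinset.card : ℚ) / (Fintype.card V : ℚ) < 8 / 3) :
    (∃ v w : V, G.Adj v w ∧ G.degree v = 2 ∧ G.degree w = 2) ∨
    (∃ T : Set V, T.Nonempty ∧
      (∀ v ∈ T, G.degree v = 3) ∧
      (∀ u ∈ T, ∀ v : V, G.Adj u v → G.degree v = 3 → v ∈ T) ∧
      (G.induce T).Connected ∧ (G.induce T).IsAcyclic ∧
      (∀ u ∈ T, ∀ v : V, v ∉ T → G.Adj u v → G.degree v = 2)) :=
  stmt_18_general G hδ havg
end
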